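/- Let n be a positive integer and p a prime not dividing 14. The equation 2x^2 + 7y^2 = n has a solution in the p-adic integers Z_p if and only if either v_p(n) is even, or the Legendre symbol (-14/p) = 1. -/

import Mathlib

/-!
As `p ∤ 14`, the prime `p` is odd and `2`, `7` are `p`-adic units. If `-14` is not a square modulo `p`,
the form `2x² + 7y²` is anisotropic modulo `p`, so `p ∣ 2x² + 7y²` forces `p ∣ x` and `p ∣ y`; dividing
by `p²` and descending shows that every nonzero value of the form has even valuation. Conversely, over
the residue field every element is a value of the form, and Hensel's lemma lifts such a representation of
a unit along a coordinate with nonzero residue; multiplying by `p^k` handles even valuation. If `-14` is a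
square modulo `p`, Hensel makes it a square in `ℤ_[p]`; an isotropic binary form with unit coefficients
represents everything.
-/

open Polynomial

theorem eq_zero_and_eq_zero_of_mul_sq_add_mul_sq_eq_zero {K : Type*} [Field K] {a b x y : K}
    (hab : ¬IsSquare (-(a * b))) (h : a * x ^ 2 + b * y ^ 2 = 0) : x = 0 ∧ y = 0 := by
  have hy : y = 0 := by
    by_contra hy
    have hyy := mul_inv_cancel₀ hy
    exact hab ⟨a * x * y⁻¹, by linear_combination (-a * y⁻¹ ^ 2) * h + a * b * (y * y⁻¹ + 1) * hyy⟩
  have ha : a ≠ 0 := by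
    rintro rfl
    exact hab ⟨0, by simp⟩
  subst hy
  simpa [ha] using h

theorem FiniteField.exists_mul_sq_add_mul_sq_eq {K : Type*} [Field K] [Fintype K]
    (hK : Fintype.card K % 2 = 1) {a b : K} (ha : a ≠ 0) (hb : b ≠ 0) (c : K) :
    ∃ x y, a * x ^ 2 + b * y ^ 2 = c := by
  have hf : (C a * X ^ 2 - C c).degree = 2 := by
    rw [degree_sub_C] <;> rw [degree_C_mul_X_pow 2 ha] <;> norm_num
  obtain ⟨x, y, h⟩ := exists_root_sum_quadratic hf (degree_C_mul_X_pow 2 hb) hK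
  exact ⟨x, y, by simp only [eval_sub, eval_mul, eval_C, eval_pow, eval_X] at h; linear_combination h⟩

theorem exists_mul_sq_add_mul_sq_eq_of_sq_eq {R : Type*} [CommRing R] {a b s : R}
    (h2 : IsUnit (2 : R)) (ha : IsUnit a) (hs : IsUnit s) (hsab : s ^ 2 = -(a * b)) (c : R) :
    ∃ x y, a * x ^ 2 + b * y ^ 2 = c := by
  -- `x = (c + a) / 2a` and `y = (c - a) / 2s` give `4a (a x² + b y²) = (c + a)² - (c - a)² = 4ac`.
  obtain ⟨i, hi⟩ := (h2.mul ha).exists_right_inv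
  obtain ⟨j, hj⟩ := (h2.mul hs).exists_right_inv
  set x := (c + a) * i
  set y := (c - a) * j
  have hx : 2 * a * x = c + a := by linear_combination (c + a) * hi
  have hy : 2 * s * y = c - a := by linear_combination (c - a) * hj
  refine ⟨x, y, (h2.mul h2 |>.mul ha).mul_left_cancel ?_⟩
  linear_combination (2 * a * x + c + a) * hx - (2 * s * y + c - a) * hy + 4 * y ^ 2 * hsab

namespace PadicInt

variable {p : ℕ} [Fact p.Prime]

theorem toZMod_eq_zero_iff_dvd (x : ℤ_[p]) : toZMod x = 0 ↔ (p : ℤ_[p]) ∣ x := by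
  rw [← RingHom.mem_ker, ker_toZMod, maximalIdeal_eq_span_p, Ideal.mem_span_singleton]

theorem isUnit_iff_toZMod_ne_zero {x : ℤ_[p]} : IsUnit x ↔ toZMod x ≠ 0 := by
  rw [← IsLocalRing.notMem_maximalIdeal, ← ker_toZMod, RingHom.mem_ker]

theorem isUnit_two (hp : p ≠ 2) : IsUnit (2 : ℤ_[p]) := by
  rw [isUnit_iff_toZMod_ne_zero, map_ofNat]
  exact Ring.two_ne_zero (by rwa [ZMod.ringChar_zmod_n])

theorem exists_mul_sq_eq_of_toZMod (hp : p ≠ 2) {u c : ℤ_[p]} (hc : IsUnit c) {a : ZMod p}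
    (h : toZMod u * a ^ 2 = toZMod c) : ∃ x, u * x ^ 2 = c := by
  obtain ⟨x₀, rfl⟩ := ZMod.ringHom_surjective toZMod a
  have hux₀ : toZMod u * toZMod x₀ ≠ 0 := fun h0 ↦
    isUnit_iff_toZMod_ne_zero.mp hc (by rw [← h]; linear_combination toZMod x₀ * h0)
  have hF : ‖(C u * X ^ 2 - C c).aeval x₀‖ < 1 := by
    rw [norm_lt_one_iff_dvd, ← toZMod_eq_zero_iff_dvd]
    simp [h]
  have hF' : ‖(C u * X ^ 2 - C c).derivative.aeval x₀‖ = 1 := by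
    have hder : (C u * X ^ 2 - C c).derivative.aeval x₀ = 2 * (u * x₀) := by
      simp only [derivative_sub, derivative_mul, derivative_C, zero_mul, derivative_X_pow_succ,
        Nat.cast_one, map_add, map_one, pow_one, zero_add, sub_zero, coe_aeval_eq_eval, eval_mul,
        eval_C, eval_add, eval_one, eval_X]
      ring
    rw [hder, ← isUnit_iff]
    exact (isUnit_two hp).mul (isUnit_iff_toZMod_ne_zero.mpr (by rwa [map_mul]))
  obtain ⟨x, hx, -⟩ := hensels_lemma (F := C u * X ^ 2 - C c) (a := x₀) (by rwa [hF', one_pow])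
  exact ⟨x, sub_eq_zero.mp (by simpa using hx)⟩

theorem exists_mul_sq_add_mul_sq_eq_of_isUnit (hp : p ≠ 2) {a b m : ℤ_[p]} (ha : IsUnit a)
    (hb : IsUnit b) (hm : IsUnit m) : ∃ x y, a * x ^ 2 + b * y ^ 2 = m := by
  have hcard : Fintype.card (ZMod p) % 2 = 1 := by
    rw [ZMod.card]
    exact Nat.odd_iff.mp ((Fact.out : p.Prime).odd_of_ne_two hp)
  obtain ⟨x₀, y₀, h₀⟩ := FiniteField.exists_mul_sq_add_mul_sq_eq hcard
    (isUnit_iff_toZMod_ne_zero.mp ha) (isUnit_iff_toZMod_ne_zero.mp hb) (toZMod m)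
  by_cases hx₀ : x₀ = 0
  · obtain ⟨y, hy⟩ := exists_mul_sq_eq_of_toZMod hp hm (u := b) (a := y₀) (by rw [← h₀, hx₀]; ring)
    exact ⟨0, y, by rw [← hy]; ring⟩
  · obtain ⟨y, rfl⟩ := ZMod.ringHom_surjective toZMod y₀
    have hres : toZMod (m - b * y ^ 2) = toZMod a * x₀ ^ 2 := by
      rw [map_sub, map_mul, map_pow, ← h₀]; ring
    have hc : IsUnit (m - b * y ^ 2) := isUnit_iff_toZMod_ne_zero.mpr
      (hres ▸ mul_ne_zero (isUnit_iff_toZMod_ne_zero.mp ha) (pow_ne_zero 2 hx₀))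
    obtain ⟨x, hx⟩ := exists_mul_sq_eq_of_toZMod hp hc hres.symm
    exact ⟨x, y, by rw [hx]; ring⟩

theorem exists_mul_sq_add_mul_sq_eq_of_even_valuation (hp : p ≠ 2) {a b z : ℤ_[p]}
    (ha : IsUnit a) (hb : IsUnit b) (hz : z ≠ 0) (hv : Even z.valuation) :
    ∃ x y, a * x ^ 2 + b * y ^ 2 = z := by
  obtain ⟨k, hk⟩ := hv
  obtain ⟨x, y, h⟩ := exists_mul_sq_add_mul_sq_eq_of_isUnit hp ha hb (unitCoeff hz).isUnit
  refine ⟨p ^ k * x, p ^ k * y, ?_⟩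
  conv_rhs => rw [unitCoeff_spec hz, hk, ← h]
  ring

theorem exists_mul_sq_add_mul_sq_eq_of_isSquare (hp : p ≠ 2) {a b : ℤ_[p]} (ha : IsUnit a)
    (hb : IsUnit b) (hab : IsSquare (toZMod (-(a * b)))) (z : ℤ_[p]) :
    ∃ x y, a * x ^ 2 + b * y ^ 2 = z := by
  obtain ⟨r, hr⟩ := hab
  have habu : IsUnit (-(a * b)) := (ha.mul hb).neg
  obtain ⟨s, hs⟩ := exists_mul_sq_eq_of_toZMod hp habu (u := 1) (a := r)
    (by rw [map_one, one_mul, hr, sq])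
  rw [one_mul] at hs
  have hsu : IsUnit s := (isUnit_pow_iff two_ne_zero).mp (hs ▸ habu)
  exact exists_mul_sq_add_mul_sq_eq_of_sq_eq (isUnit_two hp) ha hsu hs z

theorem even_valuation_of_mul_sq_add_mul_sq_eq {a b x y z : ℤ_[p]}
    (hab : ¬IsSquare (toZMod (-(a * b)))) (hz : z ≠ 0) (h : a * x ^ 2 + b * y ^ 2 = z) :
    Even z.valuation := by
  induction hv : z.valuation using Nat.strong_induction_on generalizing x y z with
  | _ v ih =>
  rcases Nat.eq_zero_or_pos v with rfl | hv0
  · exact .zero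
  have hpz : (p : ℤ_[p]) ∣ z := by
    rw [unitCoeff_spec hz, hv]
    exact dvd_mul_of_dvd_right (dvd_pow_self _ hv0.ne') _
  have hxy := eq_zero_and_eq_zero_of_mul_sq_add_mul_sq_eq_zero (by simpa using hab)
    (by simpa [← h] using (toZMod_eq_zero_iff_dvd z).mpr hpz)
  obtain ⟨x₁, rfl⟩ := (toZMod_eq_zero_iff_dvd x).mp hxy.1
  obtain ⟨y₁, rfl⟩ := (toZMod_eq_zero_iff_dvd y).mp hxy.2
  have hz₁ : (p : ℤ_[p]) ^ 2 * (a * x₁ ^ 2 + b * y₁ ^ 2) = z := by rw [← h]; ring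
  have hz₁0 : a * x₁ ^ 2 + b * y₁ ^ 2 ≠ 0 := by
    rintro h0
    rw [h0, mul_zero] at hz₁
    exact hz hz₁.symm
  have hv₁ : v = 2 + (a * x₁ ^ 2 + b * y₁ ^ 2).valuation := by
    rw [← hv, ← hz₁, valuation_p_pow_mul _ _ hz₁0]
  rw [hv₁]
  exact even_two.add (ih _ (by omega) hz₁0 rfl rfl)

theorem exists_mul_sq_add_mul_sq_eq_iff (hp : p ≠ 2) {a b z : ℤ_[p]} (ha : IsUnit a)
    (hb : IsUnit b) (hz : z ≠ 0) :
    (∃ x y, a * x ^ 2 + b * y ^ 2 = z) ↔ Even z.valuation ∨ IsSquare (toZMod (-(a * b))) := by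
  refine ⟨fun ⟨x, y, h⟩ ↦ or_iff_not_imp_right.mpr fun hab ↦
    even_valuation_of_mul_sq_add_mul_sq_eq hab hz h, ?_⟩
  rintro (hv | hab)
  · exact exists_mul_sq_add_mul_sq_eq_of_even_valuation hp ha hb hz hv
  · exact exists_mul_sq_add_mul_sq_eq_of_isSquare hp ha hb hab z

theorem valuation_natCast (n : ℕ) : (n : ℤ_[p]).valuation = padicValNat p n := by
  have h := valuation_coe (n : ℤ_[p])
  rw [coe_natCast, Padic.valuation_natCast] at h
  exact_mod_cast h.symm

end PadicInt

open PadicInt in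
theorem local_solvability_away_from_fourteen (n : ℕ) (hn : 0 < n)
    (p : ℕ) [Fact p.Prime] (hp : ¬ p ∣ 14) :
    (∃ x y : ℤ_[p], 2 * x ^ 2 + 7 * y ^ 2 = (n : ℤ_[p])) ↔
      (Even (padicValNat p n) ∨ legendreSym p (-14) = 1) := by
  have h14 : ((14 : ℕ) : ZMod p) ≠ 0 := (ZMod.natCast_eq_zero_iff 14 p).not.mpr hp
  have h14u : IsUnit ((2 : ℤ_[p]) * 7) := by
    rw [isUnit_iff_toZMod_ne_zero, map_mul, map_ofNat, map_ofNat]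
    exact_mod_cast h14
  have hp2 : p ≠ 2 := by
    rintro rfl
    exact hp (by norm_num)
  have hleg : legendreSym p (-14) = 1 ↔ IsSquare (toZMod (-(2 * 7) : ℤ_[p])) := by
    rw [legendreSym.eq_one_iff p (by simpa using h14), map_neg, map_mul, map_ofNat, map_ofNat]
    norm_num
  rw [exists_mul_sq_add_mul_sq_eq_iff hp2 (isUnit_of_mul_isUnit_left h14u)
    (isUnit_of_mul_isUnit_right h14u) (Nat.cast_ne_zero.mpr hn.ne'), valuation_natCast, hleg]
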